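/- arXiv:0809.2148 — 4 statements merged into one kernel-verified Lean document; each statement's English description precedes it below -/
import Mathlib

section
/- (Proposition 4.1, perfect channel learning.) Suppose that for j = 1, 2 the condition ker(A_j^H G_j) ⊆ ker(B_j G_j) holds, i.e., for every vector e ∈ ℂ^{M_t}, A_j^H G_j e = 0 implies B_j G_j e = 0. Let G_eff ∈ ℂ^{M_t×M_t} satisfy G_eff^H G_eff = Q_s (i.e., G_eff^H is a square root of Q_s). Then for any matrix A_CR ∈ ℂ^{M_t×d_CR} with G_eff A_CR = 0, it holds that B_1 G_1 A_CR = 0 and B_2 G_2 A_CR = 0. -/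
open Matrix

private lemma aux_star_dot {m n : ℕ} (M : Matrix (Fin m) (Fin n) ℂ) (v : Fin n → ℂ) :
    star v ⬝ᵥ (Mᴴ * M).mulVec v = star (M.mulVec v) ⬝ᵥ (M.mulVec v) := by
  rw [Matrix.star_mulVec, ← Matrix.mulVec_mulVec, Matrix.dotProduct_mulVec]

private lemma aux_sum_normSq {n : ℕ} (w : Fin n → ℂ) :
    star w ⬝ᵥ w = ((∑ i, Complex.normSq (w i) : ℝ) : ℂ) := by
  simp [dotProduct, Complex.normSq_eq_conj_mul_self]

/-- Proposition 4.1: Under the conditions `ker(A_jᴴ G_j) ⊆ ker(B_j G_j)`,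
if `G_effᴴ G_eff = Q_s` and `G_eff A_CR = 0`, then `B_j G_j A_CR = 0` for `j = 1, 2`. -/
theorem stmt2 {Mt M1 M2 d1 d2 dCR : ℕ}
    (G1 : Matrix (Fin M1) (Fin Mt) ℂ) (G2 : Matrix (Fin M2) (Fin Mt) ℂ)
    (A1 : Matrix (Fin M1) (Fin d1) ℂ) (A2 : Matrix (Fin M2) (Fin d2) ℂ)
    (B1 : Matrix (Fin d2) (Fin M1) ℂ) (B2 : Matrix (Fin d1) (Fin M2) ℂ)
    (α1 α2 : ℝ) (hα1 : 0 < α1) (hα2 : 0 < α2)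
    (Qs : Matrix (Fin Mt) (Fin Mt) ℂ)
    (hQs : Qs = (α1 : ℂ) • (G1ᴴ * (A1 * A1ᴴ) * G1) + (α2 : ℂ) • (G2ᴴ * (A2 * A2ᴴ) * G2))
    (h1 : ∀ e : Fin Mt → ℂ, (A1ᴴ * G1).mulVec e = 0 → (B1 * G1).mulVec e = 0)
    (h2 : ∀ e : Fin Mt → ℂ, (A2ᴴ * G2).mulVec e = 0 → (B2 * G2).mulVec e = 0)
    (Geff : Matrix (Fin Mt) (Fin Mt) ℂ) (hGeff : Geffᴴ * Geff = Qs)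
    (ACR : Matrix (Fin Mt) (Fin dCR) ℂ) (hACR : Geff * ACR = 0) :
    B1 * G1 * ACR = 0 ∧ B2 * G2 * ACR = 0 := by
  -- key claim: for each column `v` of ACR, `A1ᴴ G1 v = 0` and `A2ᴴ G2 v = 0`.
  have key : ∀ c : Fin dCR, (A1ᴴ * G1).mulVec (fun j => ACR j c) = 0 ∧
      (A2ᴴ * G2).mulVec (fun j => ACR j c) = 0 := by
    intro c
    set v : Fin Mt → ℂ := fun j => ACR j c with hv
    have hGv : Geff.mulVec v = 0 := by
      funext i
      have := congrFun (congrFun hACR i) c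
      simpa [Matrix.mul_apply, Matrix.mulVec, dotProduct, hv] using this
    set w1 := (A1ᴴ * G1).mulVec v with hw1
    set w2 := (A2ᴴ * G2).mulVec v with hw2
    have hrw1 : G1ᴴ * (A1 * A1ᴴ) * G1 = (A1ᴴ * G1)ᴴ * (A1ᴴ * G1) := by
      simp [Matrix.conjTranspose_mul, Matrix.mul_assoc]
    have hrw2 : G2ᴴ * (A2 * A2ᴴ) * G2 = (A2ᴴ * G2)ᴴ * (A2ᴴ * G2) := by
      simp [Matrix.conjTranspose_mul, Matrix.mul_assoc]
    have hq : star v ⬝ᵥ Qs.mulVec v = 0 := by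
      rw [← hGeff, aux_star_dot, hGv]
      simp
    rw [hQs, hrw1, hrw2] at hq
    have hq2 : (α1 : ℂ) * (star w1 ⬝ᵥ w1) + (α2 : ℂ) * (star w2 ⬝ᵥ w2) = 0 := by
      rw [Matrix.add_mulVec, Matrix.smul_mulVec, Matrix.smul_mulVec,
        dotProduct_add, dotProduct_smul, dotProduct_smul,
        aux_star_dot, aux_star_dot] at hq
      simpa [smul_eq_mul, hw1, hw2] using hq
    rw [aux_sum_normSq w1, aux_sum_normSq w2] at hq2
    set s1 : ℝ := ∑ i, Complex.normSq (w1 i) with hs1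
    set s2 : ℝ := ∑ i, Complex.normSq (w2 i) with hs2
    have hs1nn : 0 ≤ s1 := Finset.sum_nonneg fun i _ => Complex.normSq_nonneg _
    have hs2nn : 0 ≤ s2 := Finset.sum_nonneg fun i _ => Complex.normSq_nonneg _
    have hreal : α1 * s1 + α2 * s2 = 0 := by
      have := congrArg Complex.re hq2
      simpa using this
    have hs1z : s1 = 0 := by nlinarith
    have hs2z : s2 = 0 := by nlinarith
    constructor
    · funext i
      have : Complex.normSq (w1 i) = 0 := by
        have := (Finset.sum_eq_zero_iff_of_nonneg
          (fun i _ => Complex.normSq_nonneg (w1 i))).mp hs1z i (Finset.mem_univ i)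
        exact this
      simpa using Complex.normSq_eq_zero.mp this
    · funext i
      have : Complex.normSq (w2 i) = 0 := by
        have := (Finset.sum_eq_zero_iff_of_nonneg
          (fun i _ => Complex.normSq_nonneg (w2 i))).mp hs2z i (Finset.mem_univ i)
        exact this
      simpa using Complex.normSq_eq_zero.mp this
  constructor
  · funext i c
    have hb := h1 _ (key c).1
    have := congrFun hb i
    simpa [Matrix.mul_apply, Matrix.mulVec, dotProduct] using this
  · funext i c
    have hb := h2 _ (key c).2
    have := congrFun hb i
    simpa [Matrix.mul_apply, Matrix.mulVec, dotProduct] using this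
end

section
/- (Closed-form water-filling value, Eq. (22).) Assume additionally σ_n² > 0, and define q_0 = 0, q_k = kρ₁/σ_{k+1}² − Σ_{i=1}^k ρ₁/σ_i² for 1 ≤ k ≤ n−1, and q_n = +∞. Then for every k with 1 ≤ k ≤ n and every z with q_{k−1} ≤ z (and, when k < n, z ≤ q_k), one has f(z) = Σ_{i=1}^k log( (σ_i²/(k ρ₁)) · ( z + Σ_{j=1}^k ρ₁/σ_j² ) ); moreover the supremum is attained by x_i = (z + Σ_{j=1}^k ρ₁/σ_j²)/k − ρ₁/σ_i² for i ≤ k and x_i = 0 for i > k. -/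
/-- closed-form water-filling value, Eq. (22).
Here `σ i` is the 0-based gain `σ_{i+1}²`, so `σ (k-1)` is the paper's `σ_k²` and the
breakpoint `q_k = kρ₁/σ_{k+1}² − Σ_{i=1}^k ρ₁/σ_i²` reads
`q k = k ρ / σ k − Σ_{i ∈ range k} ρ / σ i`. -/
theorem stmt12 {n : ℕ} (hn : 1 ≤ n) (ρ : ℝ) (hρ : 0 < ρ)
    (σ : ℕ → ℝ)
    (hmono : ∀ i j, i ≤ j → j < n → σ j ≤ σ i)
    (hpos : 0 < σ (n - 1))
    (f : ℝ → ℝ)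
    (hf : ∀ z : ℝ, f z = sSup {y : ℝ | ∃ x : ℕ → ℝ,
      (∀ i < n, 0 ≤ x i) ∧ (∑ i ∈ Finset.range n, x i) ≤ z ∧
      y = ∑ i ∈ Finset.range n, Real.log (1 + σ i * x i / ρ)})
    (q : ℕ → ℝ) (hq0 : q 0 = 0)
    (hqk : ∀ k, 1 ≤ k → k ≤ n - 1 →
      q k = k * ρ / σ k - ∑ i ∈ Finset.range k, ρ / σ i)
    (k : ℕ) (hk1 : 1 ≤ k) (hkn : k ≤ n)
    (z : ℝ) (hz1 : q (k - 1) ≤ z) (hz2 : k < n → z ≤ q k) :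
    f z = (∑ i ∈ Finset.range k,
        Real.log (σ i / (k * ρ) * (z + ∑ j ∈ Finset.range k, ρ / σ j))) ∧
    (∀ i < n, 0 ≤ (if i < k then (z + ∑ j ∈ Finset.range k, ρ / σ j) / k - ρ / σ i else 0)) ∧
    (∑ i ∈ Finset.range n,
        (if i < k then (z + ∑ j ∈ Finset.range k, ρ / σ j) / k - ρ / σ i else 0)) ≤ z ∧
    (∑ i ∈ Finset.range n, Real.log (1 + σ i *
        (if i < k then (z + ∑ j ∈ Finset.range k, ρ / σ j) / k - ρ / σ i else 0) / ρ)) = f z := by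
  have hσpos : ∀ i, i < n → 0 < σ i := fun i hi =>
    lt_of_lt_of_le hpos (hmono i (n - 1) (by omega) (by omega))
  have hkpos : (0:ℝ) < (k:ℝ) := by exact_mod_cast hk1
  have hkn' : k - 1 < n := by omega
  have hσk1 : 0 < σ (k - 1) := hσpos _ hkn'
  set S : ℝ := z + ∑ j ∈ Finset.range k, ρ / σ j with hSdef
  have hSk : (k:ℝ) * ρ / σ (k - 1) ≤ S := by
    rcases Nat.lt_or_ge k 2 with h2 | h2
    · have hk : k = 1 := by omega
      subst hk
      have hz0 : (0:ℝ) ≤ z := by rw [← hq0]; simpa using hz1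
      rw [hSdef]
      simp only [Finset.sum_range_one, Nat.cast_one]
      have : (1:ℝ) * ρ / σ (1 - 1) = ρ / σ 0 := by norm_num
      rw [this]
      linarith
    · have hq := hqk (k - 1) (by omega) (by omega)
      rw [hq] at hz1
      have hc : ((k - 1 : ℕ):ℝ) = (k:ℝ) - 1 := by
        rw [Nat.cast_sub hk1, Nat.cast_one]
      rw [hc] at hz1
      have hsplit := Finset.sum_range_succ (fun j => ρ / σ j) (k - 1)
      rw [show k - 1 + 1 = k from by omega] at hsplit
      rw [hSdef, hsplit]
      have : ((k:ℝ) - 1) * ρ / σ (k - 1) + ρ / σ (k - 1) = (k:ℝ) * ρ / σ (k - 1) := by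
        ring
      linarith
  have hSpos : 0 < S := lt_of_lt_of_le (div_pos (mul_pos hkpos hρ) hσk1) hSk
  set w : ℝ := S / (k:ℝ) with hwdef
  have hwpos : 0 < w := div_pos hSpos hkpos
  have haw : ∀ i, i < k → ρ / σ i ≤ w := by
    intro i hi
    have hσi : 0 < σ i := hσpos i (by omega)
    have h1 : ρ / σ i ≤ ρ / σ (k - 1) := by
      apply div_le_div_of_nonneg_left hρ.le hσk1 (hmono i (k - 1) (by omega) hkn')
    have h2 : ρ / σ (k - 1) ≤ w := by
      rw [hwdef, le_div_iff₀ hkpos]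
      have : ρ / σ (k - 1) * (k:ℝ) = (k:ℝ) * ρ / σ (k - 1) := by ring
      linarith
    linarith
  have hwa : ∀ i, k ≤ i → i < n → w ≤ ρ / σ i := by
    intro i hik hin
    have hkn2 : k < n := by omega
    have hq := hqk k hk1 (by omega)
    have hz2' := hz2 hkn2
    rw [hq] at hz2'
    have hSle : S ≤ (k:ℝ) * ρ / σ k := by rw [hSdef]; linarith
    have hσk : 0 < σ k := hσpos k hkn2
    have hσi : 0 < σ i := hσpos i hin
    have h2 : w ≤ ρ / σ k := by
      rw [hwdef, div_le_iff₀ hkpos]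
      have : ρ / σ k * (k:ℝ) = (k:ℝ) * ρ / σ k := by ring
      linarith
    have h3 : ρ / σ k ≤ ρ / σ i := by
      apply div_le_div_of_nonneg_left hρ.le hσi (hmono k i hik hin)
    linarith
  have hred : ∀ g : ℕ → ℝ,
      ∑ i ∈ Finset.range n, (if i < k then g i else 0) = ∑ i ∈ Finset.range k, g i := by
    intro g
    rw [← Finset.sum_subset (Finset.range_subset_range.mpr hkn)
      (fun i _ hik => if_neg (by simpa using hik))]
    exact Finset.sum_congr rfl fun i hi => if_pos (Finset.mem_range.mp hi)
  have hkw : (k:ℝ) * w = S := by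
    rw [hwdef]; field_simp
  have hx0 : ∀ i, i < n → 0 ≤ (if i < k then w - ρ / σ i else 0) := by
    intro i hi
    by_cases h : i < k
    · rw [if_pos h]; linarith [haw i h]
    · rw [if_neg h]
  have hsum : (∑ i ∈ Finset.range n, (if i < k then w - ρ / σ i else 0)) = z := by
    rw [hred (fun i => w - ρ / σ i), Finset.sum_sub_distrib, Finset.sum_const,
      Finset.card_range, nsmul_eq_mul, hkw, hSdef]
    ring
  have hval : (∑ i ∈ Finset.range n,
      Real.log (1 + σ i * (if i < k then w - ρ / σ i else 0) / ρ))
      = ∑ i ∈ Finset.range k, Real.log (σ i / ((k:ℝ) * ρ) * S) := by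
    have hc : ∀ i ∈ Finset.range n,
        Real.log (1 + σ i * (if i < k then w - ρ / σ i else 0) / ρ)
        = (if i < k then Real.log (σ i / ((k:ℝ) * ρ) * S) else 0) := by
      intro i hi
      have hin : i < n := Finset.mem_range.mp hi
      have hσi : (σ i) ≠ 0 := (hσpos i hin).ne'
      by_cases h : i < k
      · rw [if_pos h, if_pos h]
        congr 1
        rw [hwdef]
        field_simp
        ring
      · rw [if_neg h, if_neg h]; simp
    rw [Finset.sum_congr rfl hc, hred (fun i => Real.log (σ i / ((k:ℝ) * ρ) * S))]
  set C : ℝ := ∑ i ∈ Finset.range k, Real.log (σ i / ((k:ℝ) * ρ) * S) with hCdef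
  have hub : ∀ y ∈ {y : ℝ | ∃ x : ℕ → ℝ,
      (∀ i < n, 0 ≤ x i) ∧ (∑ i ∈ Finset.range n, x i) ≤ z ∧
      y = ∑ i ∈ Finset.range n, Real.log (1 + σ i * x i / ρ)}, y ≤ C := by
    rintro y ⟨x, hx0', hxs, rfl⟩
    have hterm : ∀ i ∈ Finset.range n, Real.log (1 + σ i * x i / ρ)
        ≤ (if i < k then Real.log (σ i / ((k:ℝ) * ρ) * S) else 0)
          + (ρ / σ i + x i - (if i < k then w else ρ / σ i)) / w := by
      intro i hi
      have hin : i < n := Finset.mem_range.mp hi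
      have hσi : 0 < σ i := hσpos i hin
      have hxi : 0 ≤ x i := hx0' i hin
      have hai : 0 < ρ / σ i := div_pos hρ hσi
      by_cases h : i < k
      · rw [if_pos h, if_pos h]
        have harg : 1 + σ i * x i / ρ = (ρ / σ i + x i) / (ρ / σ i) := by
          field_simp
        have hC2 : σ i / ((k:ℝ) * ρ) * S = w / (ρ / σ i) := by
          rw [hwdef]; field_simp
        rw [harg, hC2, Real.log_div (by positivity) hai.ne',
          Real.log_div hwpos.ne' hai.ne']
        have h1 : Real.log ((ρ / σ i + x i) / w) ≤ (ρ / σ i + x i) / w - 1 :=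
          Real.log_le_sub_one_of_pos (by positivity)
        rw [Real.log_div (by positivity) hwpos.ne'] at h1
        have h2 : (ρ / σ i + x i) / w - 1 = (ρ / σ i + x i - w) / w := by
          field_simp
        linarith
      · rw [if_neg h, if_neg h]
        have h1 : Real.log (1 + σ i * x i / ρ) ≤ σ i * x i / ρ := by
          have := Real.log_le_sub_one_of_pos (show (0:ℝ) < 1 + σ i * x i / ρ by positivity)
          linarith
        have hwa' := hwa i (le_of_not_gt h) hin
        have h2 : σ i * x i / ρ = x i / (ρ / σ i) := by
          field_simp
        have h3 : x i / (ρ / σ i) ≤ x i / w := by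
          gcongr
        have h4 : (ρ / σ i + x i - ρ / σ i) / w = x i / w := by
          rw [add_sub_cancel_left]
        linarith
    have hsum2 : ∑ i ∈ Finset.range n,
        ((if i < k then Real.log (σ i / ((k:ℝ) * ρ) * S) else 0)
          + (ρ / σ i + x i - (if i < k then w else ρ / σ i)) / w)
        ≤ C := by
      rw [Finset.sum_add_distrib, ← Finset.sum_div,
        hred (fun i => Real.log (σ i / ((k:ℝ) * ρ) * S))]
      have hpt : ∀ i ∈ Finset.range n,
          ρ / σ i + x i - (if i < k then w else ρ / σ i)
          = (if i < k then ρ / σ i - w else 0) + x i := by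
        intro i _; by_cases h : i < k <;> simp only [h, if_true, if_false] <;> ring
      rw [Finset.sum_congr rfl hpt, Finset.sum_add_distrib,
        hred (fun i => ρ / σ i - w), Finset.sum_sub_distrib, Finset.sum_const,
        Finset.card_range, nsmul_eq_mul, hkw]
      have hnum : (∑ i ∈ Finset.range k, ρ / σ i - S) + ∑ i ∈ Finset.range n, x i ≤ 0 := by
        rw [hSdef]; linarith
      have : ((∑ i ∈ Finset.range k, ρ / σ i - S) + ∑ i ∈ Finset.range n, x i) / w ≤ 0 :=
        div_nonpos_of_nonpos_of_nonneg hnum hwpos.le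
      linarith
    calc ∑ i ∈ Finset.range n, Real.log (1 + σ i * x i / ρ)
        ≤ _ := Finset.sum_le_sum hterm
      _ ≤ C := hsum2
  have hmem : C ∈ {y : ℝ | ∃ x : ℕ → ℝ,
      (∀ i < n, 0 ≤ x i) ∧ (∑ i ∈ Finset.range n, x i) ≤ z ∧
      y = ∑ i ∈ Finset.range n, Real.log (1 + σ i * x i / ρ)} := by
    exact ⟨fun i => if i < k then w - ρ / σ i else 0, hx0, le_of_eq hsum, hval.symm⟩
  have hfz : f z = C := by
    rw [hf z]
    exact le_antisymm (csSup_le ⟨C, hmem⟩ hub) (le_csSup ⟨C, fun y hy => hub y hy⟩ hmem)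
  exact ⟨hfz, hx0, le_of_eq hsum, by rw [hval]; exact hfz.symm⟩
end

section
/- (Concavity of the throughput function g₂.) Let T > 0 and γ > 0, and let f : ℝ → ℝ be concave, nondecreasing, and nonnegative on [0, γT]. Then the function g₂(τ) = ((T − τ)/T) · f(γ τ) is concave on the interval [0, T]. -/
/-- concavity of the throughput function `g₂`: if `f` is concave,
nondecreasing and nonnegative on `[0, γT]`, then `g₂(τ) = ((T−τ)/T) f(γτ)` is concave
on `[0, T]`. -/
theorem stmt15 (T γ : ℝ) (hT : 0 < T) (hγ : 0 < γ) (f : ℝ → ℝ)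
    (hconc : ConcaveOn ℝ (Set.Icc 0 (γ * T)) f)
    (hmono : MonotoneOn f (Set.Icc 0 (γ * T)))
    (hnonneg : ∀ z ∈ Set.Icc 0 (γ * T), 0 ≤ f z) :
    ConcaveOn ℝ (Set.Icc 0 T) (fun τ => (T - τ) / T * f (γ * τ)) := by
  have hmem : ∀ x ∈ Set.Icc (0:ℝ) T, γ * x ∈ Set.Icc 0 (γ * T) := by
    intro x hx
    exact ⟨mul_nonneg hγ.le hx.1, mul_le_mul_of_nonneg_left hx.2 hγ.le⟩
  have h1 : ConcaveOn ℝ (Set.Icc (0:ℝ) T) (fun τ => (T - τ) / T) := by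
    refine ⟨convex_Icc 0 T, fun x hx y hy a b ha hb hab => ?_⟩
    have : (T - (a * x + b * y)) / T = a * ((T - x) / T) + b * ((T - y) / T) := by
      field_simp
      nlinarith [hab]
    simp only [smul_eq_mul]
    rw [this]
  have h2 : ConcaveOn ℝ (Set.Icc (0:ℝ) T) (fun τ => f (γ * τ)) := by
    refine ⟨convex_Icc 0 T, fun x hx y hy a b ha hb hab => ?_⟩
    have := hconc.2 (hmem x hx) (hmem y hy) ha hb hab
    simpa [mul_add, mul_left_comm, mul_assoc, mul_comm] using this
  have h1₀ : ∀ ⦃x⦄, x ∈ Set.Icc (0:ℝ) T → 0 ≤ (fun τ => (T - τ) / T) x := by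
    intro x hx
    exact div_nonneg (by linarith [hx.2]) hT.le
  have h2₀ : ∀ ⦃x⦄, x ∈ Set.Icc (0:ℝ) T → 0 ≤ (fun τ => f (γ * τ)) x := by
    intro x hx
    exact hnonneg _ (hmem x hx)
  have hanti : AntivaryOn (fun τ => (T - τ) / T) (fun τ => f (γ * τ)) (Set.Icc (0:ℝ) T) := by
    intro i hi j hj hlt
    have hij : i ≤ j := by
      by_contra h
      push_neg at h
      exact absurd (hmono (hmem j hj) (hmem i hi)
        (mul_le_mul_of_nonneg_left h.le hγ.le)) (not_le.2 hlt)
    exact div_le_div_of_nonneg_right (c := T) (by linarith : T - j ≤ T - i) hT.le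
  have := h1.mul h2 h1₀ h2₀ hanti
  simpa [Pi.mul_def] using this
end

section
/- (Continuity and smoothness of the water-filling formula at breakpoints, from the proof of Lemma 5.2.) Assume σ_1² ≥ … ≥ σ_n² > 0 and ρ₁ > 0. For 1 ≤ k ≤ n define F_k(z) = Σ_{i=1}^k log( (σ_i²/(k ρ₁)) ( z + Σ_{j=1}^k ρ₁/σ_j² ) ), and for 1 ≤ k ≤ n−1 define q_k = k ρ₁/σ_{k+1}² − Σ_{i=1}^k ρ₁/σ_i². Then for every 1 ≤ k ≤ n−1: (i) F_k(q_k) = F_{k+1}(q_k) = Σ_{i=1}^k log(σ_i²/σ_{k+1}²); and (ii) the derivatives match: F_k′(q_k) = F_{k+1}′(q_k) = σ_{k+1}²/ρ₁. -/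
/-!
At the breakpoint `q_k` the common factor `z + Σ_{j<k} ρ/σ_j` equals `kρ/σ_k`, and adding the
`(k+1)`-st term `ρ/σ_k` turns it into `(k+1)ρ/σ_k`. Hence every logarithm in both `F_k(q_k)` and
`F_{k+1}(q_k)` has argument `σ_i/σ_k`, the extra term of `F_{k+1}` being `log 1 = 0`. Each `F_m` is
a sum of `m` logarithms of the same affine function of `z`, so `F_m'(z) = m / (z + Σ_{j<m} ρ/σ_j)`,
which at `q_k` is `σ_k/ρ` for both `m = k` and `m = k + 1`.
-/

open Finset Real

noncomputable def waterFill (σ : ℕ → ℝ) (ρ : ℝ) (k : ℕ) (z : ℝ) : ℝ :=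
  ∑ i ∈ range k, log (σ i / (k * ρ) * (z + ∑ j ∈ range k, ρ / σ j))

theorem hasDerivAt_sum_log_mul_add {ι : Type*} (t : Finset ι) (c : ι → ℝ) (hc : ∀ i ∈ t, 0 < c i)
    {s z : ℝ} (hz : 0 < z + s) :
    HasDerivAt (fun x => ∑ i ∈ t, log (c i * (x + s))) (#t / (z + s)) z := by
  have hterm : ∀ i ∈ t, HasDerivAt (fun x => log (c i * (x + s))) (1 / (z + s)) z := by
    intro i hi
    have hlin : HasDerivAt (fun x => c i * (x + s)) (c i) z := by
      simpa using ((hasDerivAt_id z).add_const s).const_mul (c i)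
    refine ((hasDerivAt_log (mul_pos (hc i hi) hz).ne').comp z hlin).congr_deriv ?_
    field_simp [(hc i hi).ne']
  refine (HasDerivAt.fun_sum hterm).congr_deriv ?_
  rw [sum_const, nsmul_eq_mul, mul_one_div]

theorem hasDerivAt_waterFill {σ : ℕ → ℝ} {ρ : ℝ} (hρ : 0 < ρ) {k : ℕ}
    (hσ : ∀ i < k, 0 < σ i) {z : ℝ} (hz : 0 < z + ∑ j ∈ range k, ρ / σ j) :
    HasDerivAt (waterFill σ ρ k) (k / (z + ∑ j ∈ range k, ρ / σ j)) z := by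
  have hc : ∀ i ∈ range k, 0 < σ i / (k * ρ) := fun i hi => by
    have hk : (0 : ℝ) < k := Nat.cast_pos.mpr (pos_of_gt (mem_range.mp hi))
    exact div_pos (hσ i (mem_range.mp hi)) (by positivity)
  have hsum := hasDerivAt_sum_log_mul_add (range k) _ hc hz
  rwa [card_range] at hsum

theorem hasDerivAt_waterFill_of_add_eq {σ : ℕ → ℝ} {ρ : ℝ} (hρ : 0 < ρ) {k : ℕ} (hk : k ≠ 0)
    (hσ : ∀ i < k, 0 < σ i) {c z : ℝ} (hc : 0 < c)
    (hz : z + ∑ j ∈ range k, ρ / σ j = k * ρ / c) :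
    HasDerivAt (waterFill σ ρ k) (c / ρ) z := by
  have hk' : (0 : ℝ) < k := Nat.cast_pos.mpr (Nat.pos_of_ne_zero hk)
  refine (hasDerivAt_waterFill hρ hσ (by rw [hz]; positivity)).congr_deriv ?_
  rw [hz]
  field_simp

theorem waterFill_eq_sum_log_div {σ : ℕ → ℝ} {ρ : ℝ} (hρ : ρ ≠ 0) {k : ℕ} (hk : k ≠ 0)
    {c z : ℝ} (hc : c ≠ 0) (hz : z + ∑ j ∈ range k, ρ / σ j = k * ρ / c) :
    waterFill σ ρ k z = ∑ i ∈ range k, log (σ i / c) := by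
  unfold waterFill
  refine sum_congr rfl fun i _ => ?_
  rw [hz]
  congr 1
  field_simp

/-- Indices are 0-based: `σ i` is the paper's `σ_{i+1}²`, so the paper's `σ_{k+1}²` is `σ k`,
`F_k(z) = Σ_{i ∈ range k} log((σ i/(kρ))(z + Σ_{j ∈ range k} ρ/σ j))` and
`q_k = kρ/σ k − Σ_{i ∈ range k} ρ/σ i`. -/
theorem stmt19_general {n : ℕ} (ρ : ℝ) (hρ : 0 < ρ)
    (σ : ℕ → ℝ) (hpos : ∀ i < n, 0 < σ i)
    (F : ℕ → ℝ → ℝ)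
    (hF : ∀ k, 1 ≤ k → k ≤ n → ∀ z : ℝ, F k z =
      ∑ i ∈ Finset.range k, Real.log (σ i / (k * ρ) * (z + ∑ j ∈ Finset.range k, ρ / σ j)))
    (q : ℕ → ℝ)
    (hq : ∀ k, 1 ≤ k → k ≤ n - 1 → q k = k * ρ / σ k - ∑ i ∈ Finset.range k, ρ / σ i)
    (k : ℕ) (hk1 : 1 ≤ k) (hk2 : k ≤ n - 1) :
    F k (q k) = F (k + 1) (q k) ∧
    F k (q k) = (∑ i ∈ Finset.range k, Real.log (σ i / σ k)) ∧
    HasDerivAt (F k) (σ k / ρ) (q k) ∧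
    HasDerivAt (F (k + 1)) (σ k / ρ) (q k) := by
  have hσ : ∀ i < k + 1, 0 < σ i := fun i hi => hpos i (by omega)
  have hσk : 0 < σ k := hσ k k.lt_succ_self
  have hFk : F k = waterFill σ ρ k := funext (hF k hk1 (by omega))
  have hFk1 : F (k + 1) = waterFill σ ρ (k + 1) := funext (hF (k + 1) (by omega) (by omega))
  have hqk : q k + ∑ j ∈ range k, ρ / σ j = k * ρ / σ k := by
    rw [hq k hk1 hk2, sub_add_cancel]
  have hqk1 : q k + ∑ j ∈ range (k + 1), ρ / σ j = ((k + 1 : ℕ) : ℝ) * ρ / σ k := by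
    rw [sum_range_succ, ← add_assoc, hqk]
    push_cast
    ring
  have hval : F k (q k) = ∑ i ∈ range k, log (σ i / σ k) := by
    rw [hFk, waterFill_eq_sum_log_div hρ.ne' (by omega) hσk.ne' hqk]
  have hval1 : F (k + 1) (q k) = ∑ i ∈ range k, log (σ i / σ k) := by
    rw [hFk1, waterFill_eq_sum_log_div hρ.ne' k.succ_ne_zero hσk.ne' hqk1, sum_range_succ,
      div_self hσk.ne', log_one, add_zero]
  refine ⟨hval.trans hval1.symm, hval, ?_, ?_⟩
  · rw [hFk]
    exact hasDerivAt_waterFill_of_add_eq hρ (by omega) (fun i hi => hσ i (by omega)) hσk hqk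
  · rw [hFk1]
    exact hasDerivAt_waterFill_of_add_eq hρ k.succ_ne_zero hσ hσk hqk1

/-- continuity and smoothness of the water-filling formula at breakpoints.
Here `σ i` is the 0-based gain `σ_{i+1}²`, so the paper's `σ_{k+1}²` is `σ k`,
`F_k(z) = Σ_{i ∈ range k} log((σ i/(kρ))(z + Σ_{j ∈ range k} ρ/σ j))` and
`q_k = kρ/σ k − Σ_{i ∈ range k} ρ/σ i`. -/
theorem stmt19 {n : ℕ} (hn : 1 ≤ n) (ρ : ℝ) (hρ : 0 < ρ)
    (σ : ℕ → ℝ) (hpos : ∀ i < n, 0 < σ i)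
    (hmono : ∀ i j, i ≤ j → j < n → σ j ≤ σ i)
    (F : ℕ → ℝ → ℝ)
    (hF : ∀ k, 1 ≤ k → k ≤ n → ∀ z : ℝ, F k z =
      ∑ i ∈ Finset.range k, Real.log (σ i / (k * ρ) * (z + ∑ j ∈ Finset.range k, ρ / σ j)))
    (q : ℕ → ℝ)
    (hq : ∀ k, 1 ≤ k → k ≤ n - 1 → q k = k * ρ / σ k - ∑ i ∈ Finset.range k, ρ / σ i)
    (k : ℕ) (hk1 : 1 ≤ k) (hk2 : k ≤ n - 1) :
    F k (q k) = F (k + 1) (q k) ∧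
    F k (q k) = (∑ i ∈ Finset.range k, Real.log (σ i / σ k)) ∧
    HasDerivAt (F k) (σ k / ρ) (q k) ∧
    HasDerivAt (F (k + 1)) (σ k / ρ) (q k) :=
  stmt19_general ρ hρ σ hpos F hF q hq k hk1 hk2
end
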